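/- For lattices L and K both downward directed, a join-homomorphism f : K → L is weakly distributive if and only if the inverse-image map f⁻¹ : Id L → Id K (sending an ideal J of L to f⁻¹[J]) is a lattice homomorphism. -/
import Mathlib


/-- `I` is an ideal of the lattice `L`: nonempty, downward closed, and closed under joins. -/
def IsLatticeIdeal {L : Type*} [Lattice L] (I : Set L) : Prop :=
  I.Nonempty ∧ (∀ a b : L, a ≤ b → b ∈ I → a ∈ I) ∧ (∀ a b : L, a ∈ I → b ∈ I → a ⊔ b ∈ I)

/-- The join of two ideals of a lattice, as sets. -/
def idealJoin {L : Type*} [Lattice L] (A B : Set L) : Set L :=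
  {x | ∃ a ∈ A, ∃ b ∈ B, x ≤ a ⊔ b}

def WeaklyDistributive {K L : Type*} [Lattice K] [Lattice L] (f : K → L) : Prop :=
  ∀ x : K, ∀ y₀ y₁ : L, f x ≤ y₀ ⊔ y₁ →
    ∃ x₀ x₁ : K, x ≤ x₀ ⊔ x₁ ∧ f x₀ ≤ y₀ ∧ f x₁ ≤ y₁

/-- For lattices `K`, `L` (which are downward directed), a join-homomorphism
`f : K → L` is weakly distributive if and only if the inverse-image map
`Id L → Id K`, `J ↦ f⁻¹[J]`, is a lattice homomorphism of the ideal lattices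
(meets of ideals are intersections, joins are ideal joins). -/
theorem weaklyDistributive_iff_preimage_ideal_latticeHom
    {K L : Type*} [Lattice K] [Lattice L] (f : SupHom K L) :
    WeaklyDistributive f ↔
      (∀ I J : Set L, IsLatticeIdeal I → IsLatticeIdeal J →
          f ⁻¹' (I ∩ J) = (f ⁻¹' I) ∩ (f ⁻¹' J)) ∧
      (∀ I J : Set L, IsLatticeIdeal I → IsLatticeIdeal J →
          f ⁻¹' (idealJoin I J) = idealJoin (f ⁻¹' I) (f ⁻¹' J)) := by
  constructor
  · intro hwd
    refine ⟨fun I J _ _ => Set.preimage_inter, fun I J hI hJ => ?_⟩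
    ext x
    constructor
    · rintro ⟨a, ha, b, hb, hx⟩
      obtain ⟨x₀, x₁, hx01, h0, h1⟩ := hwd x a b hx
      exact ⟨x₀, hI.2.1 _ _ h0 ha, x₁, hJ.2.1 _ _ h1 hb, hx01⟩
    · rintro ⟨x₀, h0, x₁, h1, hx⟩
      refine ⟨f x₀, h0, f x₁, h1, ?_⟩
      calc f x ≤ f (x₀ ⊔ x₁) := OrderHomClass.mono f hx
        _ = f x₀ ⊔ f x₁ := map_sup f x₀ x₁
  · rintro ⟨-, hjoin⟩ x y₀ y₁ hxy
    have hI : IsLatticeIdeal {z : L | z ≤ y₀} :=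
      ⟨⟨y₀, le_rfl⟩, fun a b hab hb => hab.trans hb, fun a b ha hb => sup_le ha hb⟩
    have hJ : IsLatticeIdeal {z : L | z ≤ y₁} :=
      ⟨⟨y₁, le_rfl⟩, fun a b hab hb => hab.trans hb, fun a b ha hb => sup_le ha hb⟩
    have hx : x ∈ f ⁻¹' (idealJoin {z : L | z ≤ y₀} {z : L | z ≤ y₁}) :=
      ⟨y₀, le_rfl, y₁, le_rfl, hxy⟩
    rw [hjoin _ _ hI hJ] at hx
    obtain ⟨x₀, h0, x₁, h1, hx01⟩ := hx
    exact ⟨x₀, x₁, hx01, h0, h1⟩
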